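/- Let α_c := (5√10 − 13)/3. Then sup{α ∈ (0,∞) : for all f ∈ [0,1], 1 − 1/(α(1 + 2f(1−f))) < f} = α_c, and inf{α ∈ (0,∞) : there exists f ∈ [0,1] with 2f³ − 4f² + f + 1 − 1/α > 0} = α_c. -/

import Mathlib

/-!
Since `1 + 2f(1 - f) ≥ 1`, the condition `p(f) < f` is equivalent to `α · g(f) < 1` with
`g(f) := (1 - f)(1 + 2f(1 - f)) = 2f³ - 4f² + f + 1`, and `h(f) > 0` says `1/α < g(f)`.
On `[0, 1]` the cubic `g` attains its maximum `M = (5√10 + 13)/27` at the root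
`(4 - √10)/6` of `g'`, so the first set of intensities is `(0, 1/M)`, the second is `(1/M, ∞)`,
and `1/M = (5√10 - 13)/3`.
-/

open Set Real

namespace CriticalAlpha

def cubic (f : ℝ) : ℝ := 2 * f ^ 3 - 4 * f ^ 2 + f + 1

lemma cubic_eq_mul (f : ℝ) : cubic f = (1 - f) * (1 + 2 * f * (1 - f)) := by
  unfold cubic; ring

lemma cubicMax_sub_cubic (f : ℝ) :
    (5 * √10 + 13) / 27 - cubic f = (6 * f - 4 + √10) ^ 2 * (2 + √10 - 3 * f) / 54 := by
  have hs : √10 ^ 2 = 10 := sq_sqrt (by norm_num)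
  unfold cubic
  linear_combination (1 / 9 - f / 6 - √10 / 54) * hs

lemma isGreatest_cubic_image_Icc :
    IsGreatest (cubic '' Icc 0 1) ((5 * √10 + 13) / 27) := by
  have hs : 3 < √10 := lt_sqrt_of_sq_lt (by norm_num)
  have hs' : √10 < 4 := (sqrt_lt' (by norm_num)).2 (by norm_num)
  refine ⟨⟨(4 - √10) / 6, ⟨by linarith, by linarith⟩, ?_⟩, ?_⟩
  · linarith [cubicMax_sub_cubic ((4 - √10) / 6)]
  · rintro _ ⟨f, ⟨-, hf1⟩, rfl⟩
    have : 0 ≤ (6 * f - 4 + √10) ^ 2 * (2 + √10 - 3 * f) / 54 := by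
      have : 0 ≤ 2 + √10 - 3 * f := by linarith
      positivity
    linarith [cubicMax_sub_cubic f]

lemma inv_cubicMax : ((5 * √10 + 13) / 27)⁻¹ = (5 * √10 - 13) / 3 := by
  have hs : √10 ^ 2 = 10 := sq_sqrt (by norm_num)
  refine inv_eq_of_mul_eq_one_right ?_
  linear_combination 25 / 81 * hs

lemma one_sub_one_div_lt_iff {β f : ℝ} (hβ : 0 < β) : 1 - 1 / β < f ↔ β * (1 - f) < 1 := by
  rw [sub_lt_comm, lt_div_iff₀ hβ, mul_comm]

section MaxThreshold

variable {X : Type*} {g : X → ℝ} {S : Set X} {M : ℝ}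

lemma setOf_forall_mul_lt_one_eq_Ioo (hM : IsGreatest (g '' S) M) (hM0 : 0 < M) :
    {α : ℝ | 0 < α ∧ ∀ x ∈ S, α * g x < 1} = Ioo 0 M⁻¹ := by
  obtain ⟨⟨x₀, hx₀, hgx₀⟩, hle⟩ := hM
  ext α
  refine ⟨fun ⟨hα, hall⟩ => ⟨hα, ?_⟩, fun ⟨hα, hlt⟩ => ⟨hα, fun x hx => ?_⟩⟩
  · rw [lt_inv_comm₀ hα hM0, ← hgx₀, ← one_div, lt_div_iff₀ hα, mul_comm]
    exact hall x₀ hx₀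
  · calc α * g x ≤ α * M := mul_le_mul_of_nonneg_left (hle ⟨x, hx, rfl⟩) hα.le
      _ < M⁻¹ * M := mul_lt_mul_of_pos_right hlt hM0
      _ = 1 := inv_mul_cancel₀ hM0.ne'

lemma setOf_exists_one_div_lt_eq_Ioi (hM : IsGreatest (g '' S) M) (hM0 : 0 < M) :
    {α : ℝ | 0 < α ∧ ∃ x ∈ S, 1 / α < g x} = Ioi M⁻¹ := by
  obtain ⟨⟨x₀, hx₀, hgx₀⟩, hle⟩ := hM
  ext α
  refine ⟨fun ⟨hα, x, hx, hlt⟩ => ?_, fun hlt => ?_⟩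
  · rw [mem_Ioi, inv_lt_comm₀ hM0 hα, ← one_div]
    exact hlt.trans_le (hle ⟨x, hx, rfl⟩)
  · have hα : 0 < α := (inv_pos.2 hM0).trans hlt
    refine ⟨hα, x₀, hx₀, ?_⟩
    rwa [hgx₀, one_div, inv_lt_comm₀ hα hM0]

end MaxThreshold

end CriticalAlpha

open CriticalAlpha in
theorem critical_alpha_characterization :
    sSup {α : ℝ | 0 < α ∧ ∀ f ∈ Set.Icc (0:ℝ) 1,
        1 - 1 / (α * (1 + 2 * f * (1 - f))) < f} = (5 * Real.sqrt 10 - 13) / 3 ∧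
    sInf {α : ℝ | 0 < α ∧ ∃ f ∈ Set.Icc (0:ℝ) 1,
        2 * f ^ 3 - 4 * f ^ 2 + f + 1 - 1 / α > 0} = (5 * Real.sqrt 10 - 13) / 3 := by
  have hM0 : (0 : ℝ) < (5 * √10 + 13) / 27 := by positivity
  have hA : {α : ℝ | 0 < α ∧ ∀ f ∈ Icc (0:ℝ) 1, 1 - 1 / (α * (1 + 2 * f * (1 - f))) < f} =
      {α : ℝ | 0 < α ∧ ∀ f ∈ Icc (0:ℝ) 1, α * cubic f < 1} := by
    ext α
    refine and_congr_right fun hα => forall₂_congr fun f ⟨hf0, hf1⟩ => ?_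
    have hβ : 0 < α * (1 + 2 * f * (1 - f)) := mul_pos hα (by nlinarith)
    rw [one_sub_one_div_lt_iff hβ, cubic_eq_mul, mul_left_comm, mul_comm (1 - f)]
  have hB : {α : ℝ | 0 < α ∧ ∃ f ∈ Icc (0:ℝ) 1, 2 * f ^ 3 - 4 * f ^ 2 + f + 1 - 1 / α > 0} =
      {α : ℝ | 0 < α ∧ ∃ f ∈ Icc (0:ℝ) 1, 1 / α < cubic f} := by
    simp only [gt_iff_lt, sub_pos, cubic]
  rw [hA, hB, setOf_forall_mul_lt_one_eq_Ioo isGreatest_cubic_image_Icc hM0,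
    setOf_exists_one_div_lt_eq_Ioi isGreatest_cubic_image_Icc hM0,
    csSup_Ioo (inv_pos.2 hM0), csInf_Ioi, inv_cubicMax]
  exact ⟨rfl, rfl⟩
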